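/- arXiv:1904.01869 — 4 statements merged into one kernel-verified Lean document; each statement's English description precedes it below -/
import Mathlib

section
/- Suppose the LTI system (A,B,C,D) with m inputs and p outputs is (2r,2s)-sparse strongly observable. Consider two trajectories with initial states x¹, x², system inputs u¹_S, u²_S and system outputs y¹_S, y²_S, such that the difference sequence u¹_S(t)−u²_S(t) is supported (componentwise, uniformly in t) on a set of at most 2r input indices, and y¹_S(t)−y²_S(t) is supported on a set of at most 2s output indices. Then x¹ = x². -/
/-!
The difference of two trajectories is itself a trajectory, from the initial state `x1 - x2`
under the input `u1 - u2`. That input is supported on at most `2r` channels and the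
corresponding output vanishes on the at least `p - 2s` channels where the two outputs agree,
so strong observability of that subsystem forces `x1 - x2 = 0`.
-/

open Matrix

/-- State sequence of the discrete-time LTI system x(t+1)=Ax(t)+Bu(t). -/
def stSeq {n m : ℕ} (A : Matrix (Fin n) (Fin n) ℝ) (B : Matrix (Fin n) (Fin m) ℝ)
    (x0 : Fin n → ℝ) (u : ℕ → Fin m → ℝ) : ℕ → Fin n → ℝ
  | 0 => x0
  | t + 1 => A.mulVec (stSeq A B x0 u t) + B.mulVec (u t)

/-- Output sequence y(t)=Cx(t)+Du(t). -/
def outSeq {n m p : ℕ} (A : Matrix (Fin n) (Fin n) ℝ) (B : Matrix (Fin n) (Fin m) ℝ)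
    (C : Matrix (Fin p) (Fin n) ℝ) (D : Matrix (Fin p) (Fin m) ℝ)
    (x0 : Fin n → ℝ) (u : ℕ → Fin m → ℝ) (t : ℕ) : Fin p → ℝ :=
  C.mulVec (stSeq A B x0 u t) + D.mulVec (u t)

/-- Strong observability of the subsystem obtained by treating the inputs in `Γu` as unknown
and keeping only the outputs in `Γy`: a zero output sequence on `Γy`, for any input sequence
supported on `Γu`, forces a zero initial state. -/
def SubStrongObs {n m p : ℕ} (A : Matrix (Fin n) (Fin n) ℝ) (B : Matrix (Fin n) (Fin m) ℝ)
    (C : Matrix (Fin p) (Fin n) ℝ) (D : Matrix (Fin p) (Fin m) ℝ)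
    (Γu : Finset (Fin m)) (Γy : Finset (Fin p)) : Prop :=
  ∀ (x0 : Fin n → ℝ) (u : ℕ → Fin m → ℝ),
    (∀ (t : ℕ) (i : Fin m), i ∉ Γu → u t i = 0) →
    (∀ t : ℕ, ∀ j ∈ Γy, outSeq A B C D x0 u t j = 0) → x0 = 0

/-- `(r,s)`-sparse strong observability: every subsystem with at most `r` unknown inputs and
at least `p - s` retained outputs is strongly observable. -/
def SparseStrongObs {n m p : ℕ} (A : Matrix (Fin n) (Fin n) ℝ) (B : Matrix (Fin n) (Fin m) ℝ)
    (C : Matrix (Fin p) (Fin n) ℝ) (D : Matrix (Fin p) (Fin m) ℝ) (r s : ℕ) : Prop :=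
  ∀ (Γu : Finset (Fin m)) (Γy : Finset (Fin p)),
    Γu.card ≤ r → p - s ≤ Γy.card → SubStrongObs A B C D Γu Γy

section Linearity

variable {n m p : ℕ} (A : Matrix (Fin n) (Fin n) ℝ) (B : Matrix (Fin n) (Fin m) ℝ)
  (C : Matrix (Fin p) (Fin n) ℝ) (D : Matrix (Fin p) (Fin m) ℝ)
  (x1 x2 : Fin n → ℝ) (u1 u2 : ℕ → Fin m → ℝ)

lemma stSeq_sub (t : ℕ) :
    stSeq A B (x1 - x2) (u1 - u2) t = stSeq A B x1 u1 t - stSeq A B x2 u2 t := by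
  induction t with
  | zero => rfl
  | succ t ih =>
    simp only [stSeq, ih, Pi.sub_apply, mulVec_sub]
    abel

lemma outSeq_sub (t : ℕ) :
    outSeq A B C D (x1 - x2) (u1 - u2) t = outSeq A B C D x1 u1 t - outSeq A B C D x2 u2 t := by
  simp only [outSeq, stSeq_sub, Pi.sub_apply, mulVec_sub]
  abel

end Linearity

lemma SubStrongObs.eq_of_inputs_eqOn_of_outputs_eqOn {n m p : ℕ}
    {A : Matrix (Fin n) (Fin n) ℝ} {B : Matrix (Fin n) (Fin m) ℝ}
    {C : Matrix (Fin p) (Fin n) ℝ} {D : Matrix (Fin p) (Fin m) ℝ}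
    {Γu : Finset (Fin m)} {Γy : Finset (Fin p)} (h : SubStrongObs A B C D Γu Γy)
    {x1 x2 : Fin n → ℝ} {u1 u2 : ℕ → Fin m → ℝ}
    (hu : ∀ (t : ℕ) (i : Fin m), i ∉ Γu → u1 t i = u2 t i)
    (hy : ∀ t : ℕ, ∀ j ∈ Γy, outSeq A B C D x1 u1 t j = outSeq A B C D x2 u2 t j) :
    x1 = x2 := by
  refine sub_eq_zero.mp (h (x1 - x2) (u1 - u2) (fun t i hi => ?_) (fun t j hj => ?_))
  · simp [hu t i hi]
  · simp [outSeq_sub, hy t j hj]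

/-- under (2r,2s)-sparse strong observability, two trajectories whose system
inputs differ on at most 2r input channels and whose system outputs differ on at most 2s
output channels must have the same initial state. -/
theorem sparse_strong_obs_distinguishes {n m p : ℕ}
    (A : Matrix (Fin n) (Fin n) ℝ) (B : Matrix (Fin n) (Fin m) ℝ)
    (C : Matrix (Fin p) (Fin n) ℝ) (D : Matrix (Fin p) (Fin m) ℝ) (r s : ℕ)
    (hso : SparseStrongObs A B C D (2 * r) (2 * s))
    (x1 x2 : Fin n → ℝ) (u1 u2 : ℕ → Fin m → ℝ)
    (hu : ∃ Γu : Finset (Fin m), Γu.card ≤ 2 * r ∧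
      ∀ (t : ℕ) (i : Fin m), i ∉ Γu → u1 t i = u2 t i)
    (hy : ∃ Γ : Finset (Fin p), Γ.card ≤ 2 * s ∧
      ∀ (t : ℕ) (j : Fin p), j ∉ Γ → outSeq A B C D x1 u1 t j = outSeq A B C D x2 u2 t j) :
    x1 = x2 := by
  obtain ⟨Γu, hΓu, hu⟩ := hu
  obtain ⟨Γ, hΓ, hy⟩ := hy
  have hΓc : p - 2 * s ≤ Γᶜ.card := by
    rw [Finset.card_compl, Fintype.card_fin]
    omega
  exact (hso Γu Γᶜ hΓu hΓc).eq_of_inputs_eqOn_of_outputs_eqOn hu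
    fun t j hj => hy t j (Finset.mem_compl.mp hj)
end

section
/- Under the additive sparse attack model with at most r attacked inputs and at most s attacked outputs, the state of the LTI system can be correctly reconstructed (possibly with bounded delay) from the controller input and observed output sequences if and only if the system is (2r,2s)-sparse strongly observable. -/
open Matrix

/-- Secure state reconstruction under the sparse attack model: any two attacked trajectories
sharing the same controller input sequence and the same observed output sequence must have
the same (initial) state. -/
def CanReconstruct {n m p : ℕ} (A : Matrix (Fin n) (Fin n) ℝ) (B : Matrix (Fin n) (Fin m) ℝ)
    (C : Matrix (Fin p) (Fin n) ℝ) (D : Matrix (Fin p) (Fin m) ℝ) (r s : ℕ) : Prop :=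
  ∀ (u : ℕ → Fin m → ℝ) (x1 x2 : Fin n → ℝ)
    (w1 w2 : ℕ → Fin m → ℝ) (a1 a2 : ℕ → Fin p → ℝ),
    (∃ Γ1 : Finset (Fin m), Γ1.card ≤ r ∧ ∀ (t : ℕ) (i : Fin m), i ∉ Γ1 → w1 t i = 0) →
    (∃ Γ2 : Finset (Fin m), Γ2.card ≤ r ∧ ∀ (t : ℕ) (i : Fin m), i ∉ Γ2 → w2 t i = 0) →
    (∃ Δ1 : Finset (Fin p), Δ1.card ≤ s ∧ ∀ (t : ℕ) (j : Fin p), j ∉ Δ1 → a1 t j = 0) →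
    (∃ Δ2 : Finset (Fin p), Δ2.card ≤ s ∧ ∀ (t : ℕ) (j : Fin p), j ∉ Δ2 → a2 t j = 0) →
    (∀ t : ℕ, outSeq A B C D x1 (fun t' => u t' + w1 t') t + a1 t
            = outSeq A B C D x2 (fun t' => u t' + w2 t') t + a2 t) →
    x1 = x2

/-!
By linearity, two attacked trajectories with the same controller input and the same
observations differ by the trajectory from `x₁ - x₂` driven by the `2r`-sparse input `w₁ - w₂`,
whose output `a₂ - a₁` is `2s`-sparse. Conversely, splitting the supports of a `2r`-sparse input
and a `2s`-sparse output in halves turns such a trajectory from `x₀` into two indistinguishable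
attacked trajectories, from `x₀` and from `0`. So reconstruction is equivalent to: no nonzero
state produces a `2s`-sparse output under a `2r`-sparse input; and this is sparse strong
observability, the retained outputs being the complement of the output support.
-/

def IsSparse {T ι M : Type*} [Zero M] (k : ℕ) (f : T → ι → M) : Prop :=
  ∃ S : Finset ι, S.card ≤ k ∧ ∀ t, ∀ i ∉ S, f t i = 0

section IsSparse

variable {T ι M : Type*} [DecidableEq ι] {k l : ℕ}

theorem IsSparse.sub [AddGroup M] {f g : T → ι → M} (hf : IsSparse k f) (hg : IsSparse l g) :
    IsSparse (k + l) (f - g) := by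
  obtain ⟨S, hS, hfS⟩ := hf
  obtain ⟨R, hR, hgR⟩ := hg
  refine ⟨S ∪ R, (Finset.card_union_le S R).trans (by omega), fun t i hi => ?_⟩
  rw [Finset.mem_union, not_or] at hi
  simp [hfS t i hi.1, hgR t i hi.2]

theorem IsSparse.exists_eq_sub [AddCommGroup M] {f : T → ι → M} (hf : IsSparse (k + l) f) :
    ∃ g h : T → ι → M, IsSparse k g ∧ IsSparse l h ∧ f = g - h := by
  obtain ⟨S, hS, hfS⟩ := hf
  obtain ⟨S₁, hS₁S, hS₁⟩ := Finset.exists_subset_card_eq (min_le_right k S.card)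
  let g : T → ι → M := fun t i => if i ∈ S₁ then f t i else 0
  refine ⟨g, g - f, ⟨S₁, by omega, fun t i hi => if_neg hi⟩, ⟨S \ S₁, ?_, fun t i hi => ?_⟩, ?_⟩
  · rw [Finset.card_sdiff_of_subset hS₁S]
    omega
  · by_cases hi₁ : i ∈ S₁
    · simp [g, hi₁]
    · have hiS : i ∉ S := fun hiS => hi (Finset.mem_sdiff.mpr ⟨hiS, hi₁⟩)
      simp [g, hi₁, hfS t i hiS]
  · exact (sub_sub_cancel g f).symm

end IsSparse

section Linearity

variable {n m p : ℕ} (A : Matrix (Fin n) (Fin n) ℝ) (B : Matrix (Fin n) (Fin m) ℝ)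
  (C : Matrix (Fin p) (Fin n) ℝ) (D : Matrix (Fin p) (Fin m) ℝ)

theorem stSeq_sub_s5 (x₁ x₂ : Fin n → ℝ) (u₁ u₂ : ℕ → Fin m → ℝ) :
    stSeq A B (x₁ - x₂) (u₁ - u₂) = stSeq A B x₁ u₁ - stSeq A B x₂ u₂ := by
  funext t
  induction t with
  | zero => rfl
  | succ t ih =>
    simp only [stSeq, Pi.sub_apply] at ih ⊢
    rw [ih, mulVec_sub, mulVec_sub]
    abel

theorem outSeq_sub_s5 (x₁ x₂ : Fin n → ℝ) (u₁ u₂ : ℕ → Fin m → ℝ) :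
    outSeq A B C D (x₁ - x₂) (u₁ - u₂) = outSeq A B C D x₁ u₁ - outSeq A B C D x₂ u₂ := by
  funext t
  simp only [outSeq, stSeq_sub_s5, Pi.sub_apply, mulVec_sub]
  abel

end Linearity

section Masking

variable {n m p : ℕ} {A : Matrix (Fin n) (Fin n) ℝ} {B : Matrix (Fin n) (Fin m) ℝ}
  {C : Matrix (Fin p) (Fin n) ℝ} {D : Matrix (Fin p) (Fin m) ℝ} {r s : ℕ}

/-- An `s`-sparse output `a` of `x₀` under the input attack `w` is masked by the output attack
`-a`, which makes `x₀` indistinguishable from `0`. -/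
def NoSparseMasking (A : Matrix (Fin n) (Fin n) ℝ) (B : Matrix (Fin n) (Fin m) ℝ)
    (C : Matrix (Fin p) (Fin n) ℝ) (D : Matrix (Fin p) (Fin m) ℝ) (r s : ℕ) : Prop :=
  ∀ (x₀ : Fin n → ℝ) (w : ℕ → Fin m → ℝ) (a : ℕ → Fin p → ℝ),
    IsSparse r w → IsSparse s a → outSeq A B C D x₀ w = a → x₀ = 0

theorem sparseStrongObs_iff_noSparseMasking :
    SparseStrongObs A B C D r s ↔ NoSparseMasking A B C D r s := by
  constructor
  · rintro hObs x₀ w a ⟨Γu, hΓu, hw⟩ ⟨Δ, hΔ, ha⟩ hout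
    have hΔc : p - s ≤ Δᶜ.card := by
      rw [Finset.card_compl, Fintype.card_fin]
      omega
    refine hObs Γu Δᶜ hΓu hΔc x₀ w hw fun t j hj => ?_
    rw [hout]
    exact ha t j (Finset.mem_compl.mp hj)
  · intro hMask Γu Γy hΓu hΓy x₀ w hw hy
    have hΓyc : Γyᶜ.card ≤ s := by
      have hΓyp := Finset.card_le_univ Γy
      rw [Finset.card_compl]
      rw [Fintype.card_fin] at hΓyp ⊢
      omega
    refine hMask x₀ w _ ⟨Γu, hΓu, hw⟩ ⟨Γyᶜ, hΓyc, fun t j hj => ?_⟩ rfl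
    exact hy t j (Finset.notMem_compl.mp hj)

theorem CanReconstruct.noSparseMasking (hRec : CanReconstruct A B C D r s) :
    NoSparseMasking A B C D (2 * r) (2 * s) := by
  rintro x₀ w a hw ha hout
  rw [two_mul] at hw ha
  obtain ⟨w₁, w₂, hw₁, hw₂, rfl⟩ := hw.exists_eq_sub
  obtain ⟨a₂, a₁, ha₂, ha₁, rfl⟩ := ha.exists_eq_sub
  refine hRec 0 x₀ 0 w₁ w₂ a₁ a₂ hw₁ hw₂ ha₁ ha₂ fun t => ?_
  change outSeq A B C D x₀ (0 + w₁) t + a₁ t = outSeq A B C D 0 (0 + w₂) t + a₂ t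
  have hdiff := congrFun (outSeq_sub_s5 A B C D x₀ 0 w₁ w₂) t
  rw [sub_zero, hout, Pi.sub_apply, Pi.sub_apply] at hdiff
  rw [zero_add, zero_add]
  linear_combination -hdiff

theorem NoSparseMasking.canReconstruct (hMask : NoSparseMasking A B C D (2 * r) (2 * s)) :
    CanReconstruct A B C D r s := by
  intro u x₁ x₂ w₁ w₂ a₁ a₂ hw₁ hw₂ ha₁ ha₂ hout
  have hw := IsSparse.sub hw₁ hw₂
  have ha := IsSparse.sub ha₂ ha₁
  rw [← two_mul] at hw ha
  refine sub_eq_zero.mp (hMask (x₁ - x₂) (w₁ - w₂) (a₂ - a₁) hw ha ?_)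
  have hinput : w₁ - w₂ = (u + w₁) - (u + w₂) := by abel
  rw [hinput, outSeq_sub_s5]
  funext t
  have hobs : outSeq A B C D x₁ (u + w₁) t + a₁ t = outSeq A B C D x₂ (u + w₂) t + a₂ t :=
    hout t
  rw [Pi.sub_apply, Pi.sub_apply]
  linear_combination hobs

end Masking

/-- under at most r attacked inputs and s attacked outputs, secure state
reconstruction is possible iff the system is (2r,2s)-sparse strongly observable. -/
theorem secure_estimation_iff_sparse_strong_obs {n m p : ℕ}
    (A : Matrix (Fin n) (Fin n) ℝ) (B : Matrix (Fin n) (Fin m) ℝ)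
    (C : Matrix (Fin p) (Fin n) ℝ) (D : Matrix (Fin p) (Fin m) ℝ) (r s : ℕ) :
    CanReconstruct A B C D r s ↔ SparseStrongObs A B C D (2 * r) (2 * s) :=
  (Iff.intro CanReconstruct.noSparseMasking NoSparseMasking.canReconstruct).trans
    sparseStrongObs_iff_noSparseMasking.symm
end

section
/- For an LTI system with p outputs, if the system is (0,2s)-sparse strongly observable then s ≤ ⌊p/2⌋; equivalently, no LTI system with p outputs can tolerate more than ⌊p/2⌋ attacked outputs, since (0,2s)-sparse strong observability requires p−2s ≥ 0 with at least one remaining output contributing a nontrivial observability condition when the state space is nontrivial (n ≥ 1). -/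
open Matrix

theorem not_subStrongObs_empty_outputs {n m p : ℕ} (hn : 0 < n)
    (A : Matrix (Fin n) (Fin n) ℝ) (B : Matrix (Fin n) (Fin m) ℝ)
    (C : Matrix (Fin p) (Fin n) ℝ) (D : Matrix (Fin p) (Fin m) ℝ) (Γu : Finset (Fin m)) :
    ¬ SubStrongObs A B C D Γu ∅ := by
  intro hobs
  have h_one_eq_zero : (fun _ => 1 : Fin n → ℝ) = 0 :=
    hobs _ (fun _ _ => 0) (fun _ _ _ => rfl) (by simp)
  exact one_ne_zero (congrFun h_one_eq_zero ⟨0, hn⟩)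

theorem SparseStrongObs.lt_num_outputs {n m p : ℕ} (hn : 0 < n)
    {A : Matrix (Fin n) (Fin n) ℝ} {B : Matrix (Fin n) (Fin m) ℝ}
    {C : Matrix (Fin p) (Fin n) ℝ} {D : Matrix (Fin p) (Fin m) ℝ} {r s : ℕ}
    (h : SparseStrongObs A B C D r s) : s < p := by
  by_contra! hps
  exact not_subStrongObs_empty_outputs hn A B C D ∅
    (h ∅ ∅ (Nat.zero_le r) (by simp [Nat.sub_eq_zero_of_le hps]))

/-- for a system of order n ≥ 1 with p outputs, (0,2s)-sparse strong
observability forces s ≤ ⌊p/2⌋: no LTI system can tolerate more than ⌊p/2⌋ attacked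
outputs. -/
theorem sparse_strong_obs_output_bound {n m p : ℕ} (hn : 1 ≤ n)
    (A : Matrix (Fin n) (Fin n) ℝ) (B : Matrix (Fin n) (Fin m) ℝ)
    (C : Matrix (Fin p) (Fin n) ℝ) (D : Matrix (Fin p) (Fin m) ℝ)
    (s : ℕ) (h : SparseStrongObs A B C D 0 (2 * s)) :
    s ≤ p / 2 := by
  have h2s : 2 * s < p := h.lt_num_outputs hn
  omega
end

section
/- If for all admissible candidate sets the stacked matrix [O_{Γ_y}, N_{Γ_u→Γ_y}] is generically full rank, then any certificate (a set of inputs Γ̄_u and outputs Γ_y witnessing infeasibility of the exact batch equation) must satisfy n|Γ_y| ≥ n(1+|Γ_u|), i.e., |Γ_y| ≥ 1+|Γ_u|; consequently the certificate size |Γ̄_u| + |Γ_y| = m − |Γ_u| + |Γ_y| is at least m+1. -/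
open Matrix

namespace Matrix

variable {m n R : Type*} [Fintype m] [Fintype n] [Field R]

theorem mulVec_surjective_of_rank_eq_card_height {A : Matrix m n R}
    (hA : A.rank = Fintype.card m) : Function.Surjective A.mulVec := by
  have hrange : LinearMap.range A.mulVecLin = ⊤ :=
    Submodule.eq_top_of_finrank_eq (by rw [← Matrix.rank, hA, Module.finrank_fintype_fun_eq_card])
  exact LinearMap.range_eq_top.mp hrange

theorem card_width_lt_card_height_of_not_surjective {A : Matrix m n R}
    (hA : A.rank = min (Fintype.card m) (Fintype.card n))
    (hnotsurj : ¬ Function.Surjective A.mulVec) : Fintype.card n < Fintype.card m := by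
  by_contra! hle
  rw [min_eq_left hle] at hA
  exact hnotsurj (mulVec_surjective_of_rank_eq_card_height hA)

end Matrix

theorem certificate_size_lower_bound_general {n m p : ℕ}
    (Γu : Finset (Fin m)) (Γy : Finset (Fin p))
    (O : Matrix (Fin Γy.card × Fin n) (Fin n) ℝ)
    (N : Matrix (Fin Γy.card × Fin n) (Fin Γu.card × Fin n) ℝ)
    (hrank : (Matrix.fromCols O N).rank =
      min (Fintype.card (Fin Γy.card × Fin n))
          (Fintype.card (Fin n ⊕ Fin Γu.card × Fin n)))
    (hfail : ∃ Y : Fin Γy.card × Fin n → ℝ,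
      ¬ ∃ (x : Fin n → ℝ) (U : Fin Γu.card × Fin n → ℝ),
        Y = O.mulVec x + N.mulVec U) :
    1 + Γu.card ≤ Γy.card ∧ m + 1 ≤ (m - Γu.card) + Γy.card := by
  have hnotsurj : ¬ Function.Surjective (Matrix.fromCols O N).mulVec := by
    obtain ⟨Y, hY⟩ := hfail
    rintro hsurj
    obtain ⟨v, rfl⟩ := hsurj Y
    exact hY ⟨v ∘ Sum.inl, v ∘ Sum.inr, fromCols_mulVec O N v⟩
  have hcard := card_width_lt_card_height_of_not_surjective hrank hnotsurj
  simp only [Fintype.card_prod, Fintype.card_sum, Fintype.card_fin] at hcard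
  have hy : 1 + Γu.card < Γy.card :=
    Nat.lt_of_mul_lt_mul_right (a := n) (by linarith)
  have hu : Γu.card ≤ m := by simpa using Γu.card_le_univ
  omega

/-- for a generic system (the stacked matrix M = [O_{Γy}, N_{Γu→Γy}] of size
n|Γy| × n(1+|Γu|) is full rank), a certificate — i.e. data for which the exact batch
equation Y = O x̂ + N Û is infeasible — forces n|Γy| ≥ n(1+|Γu|), i.e. |Γy| ≥ 1 + |Γu|;
hence the certificate size (m − |Γu|) + |Γy| is at least m + 1. -/
theorem certificate_size_lower_bound {n m p : ℕ} (hn : 1 ≤ n)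
    (Γu : Finset (Fin m)) (Γy : Finset (Fin p))
    (O : Matrix (Fin Γy.card × Fin n) (Fin n) ℝ)
    (N : Matrix (Fin Γy.card × Fin n) (Fin Γu.card × Fin n) ℝ)
    (hrank : (Matrix.fromCols O N).rank =
      min (Fintype.card (Fin Γy.card × Fin n))
          (Fintype.card (Fin n ⊕ Fin Γu.card × Fin n)))
    (hfail : ∃ Y : Fin Γy.card × Fin n → ℝ,
      ¬ ∃ (x : Fin n → ℝ) (U : Fin Γu.card × Fin n → ℝ),
        Y = O.mulVec x + N.mulVec U) :
    1 + Γu.card ≤ Γy.card ∧ m + 1 ≤ (m - Γu.card) + Γy.card :=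
  certificate_size_lower_bound_general Γu Γy O N hrank hfail
end
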